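/- arXiv:1803.01831 — 3 statements merged into one kernel-verified Lean document; each statement's English description precedes it below -/
import Mathlib

section
/- If B and C are finite structures in K_α with A = B ∩ C and A ≤ B, then the free join B ⊕_A C is in K_α and C ≤ B ⊕_A C. -/
open Finset

/-- The number of subsets of `A` on which the relation `E` holds. -/
noncomputable def edgeCount {L V : Type} (rel : L → Finset V → Prop) (E : L)
    (A : Finset V) : ℕ :=
  {e : Finset V | e ⊆ A ∧ rel E e}.ncard

/-- The rank function `δ(A) = |A| - ∑_E α_E · N_E(A)`. -/
noncomputable def delta {L V : Type} [Fintype L] (α : L → ℝ)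
    (rel : L → Finset V → Prop) (A : Finset V) : ℝ :=
  (A.card : ℝ) - ∑ E, α E * (edgeCount rel E A : ℝ)

/-- `A` is strong in `B`: `A ⊆ B` and `δ(A) ≤ δ(A')` for all `A ⊆ A' ⊆ B`. -/
def strong {L V : Type} [Fintype L] (α : L → ℝ) (rel : L → Finset V → Prop)
    (A B : Finset V) : Prop :=
  A ⊆ B ∧ ∀ A' : Finset V, A ⊆ A' → A' ⊆ B → delta α rel A ≤ delta α rel A'

/-- Membership in `K_α`: all substructures have nonnegative rank. -/
def inK {L V : Type} [Fintype L] (α : L → ℝ) (rel : L → Finset V → Prop)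
    (A : Finset V) : Prop :=
  ∀ A' ⊆ A, 0 ≤ delta α rel A'

/-- `(A, B)` is a minimal pair: `A ≤ C` for all `A ⊆ C ⊊ B` but `A ≰ B`. -/
def minPair {L V : Type} [Fintype L] (α : L → ℝ) (rel : L → Finset V → Prop)
    (A B : Finset V) : Prop :=
  A ⊆ B ∧ (∀ C : Finset V, A ⊆ C → C ⊂ B → strong α rel A C) ∧ ¬ strong α rel A B

/-!
The rank `δ` is submodular, `δ(X ∪ Y) + δ(X ∩ Y) ≤ δ(X) + δ(Y)`, because every relation
inside `X` or `Y` lies inside `X ∪ Y` and the relations inside both are those inside `X ∩ Y`.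
For the two sides of a free join no relation crosses, so `δ` is modular there:
`δ(D) + δ(D ∩ A) = δ(D ∩ B) + δ(D ∩ C)` for `D ⊆ B ⊕_A C`. Strongness of `A` in `B` together
with submodularity gives `δ(D ∩ A) ≤ δ(D ∩ B)`, so `δ(D) ≥ δ(D ∩ C)`, which is `≥ 0` since
`C ∈ K_α` and `≥ δ(C)` when `C ⊆ D`.
-/

section Rank

variable {L V : Type} (rel : L → Finset V → Prop)

def edgeSet (E : L) (X : Finset V) : Set (Finset V) := {e | e ⊆ X ∧ rel E e}

lemma edgeCount_eq_ncard_edgeSet (E : L) (X : Finset V) :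
    edgeCount rel E X = (edgeSet rel E X).ncard := rfl

lemma edgeSet_mono (E : L) {X Y : Finset V} (h : X ⊆ Y) : edgeSet rel E X ⊆ edgeSet rel E Y :=
  fun _ he => ⟨he.1.trans h, he.2⟩

lemma edgeSet_finite (E : L) (X : Finset V) : (edgeSet rel E X).Finite :=
  X.powerset.finite_toSet.subset fun _ he => mem_powerset.mpr he.1

variable [DecidableEq V]

lemma edgeSet_inter (E : L) (X Y : Finset V) :
    edgeSet rel E (X ∩ Y) = edgeSet rel E X ∩ edgeSet rel E Y := by
  ext e
  simp only [edgeSet, Set.mem_inter_iff, Set.mem_ofPred_eq, subset_inter_iff]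
  tauto

lemma edgeCount_add_edgeCount (E : L) (X Y : Finset V) :
    edgeCount rel E X + edgeCount rel E Y =
      (edgeSet rel E X ∪ edgeSet rel E Y).ncard + edgeCount rel E (X ∩ Y) := by
  rw [edgeCount_eq_ncard_edgeSet, edgeCount_eq_ncard_edgeSet, edgeCount_eq_ncard_edgeSet,
    edgeSet_inter, Set.ncard_union_add_ncard_inter _ _ (edgeSet_finite _ _ _)
      (edgeSet_finite _ _ _)]

lemma edgeCount_add_edgeCount_le (E : L) (X Y : Finset V) :
    edgeCount rel E X + edgeCount rel E Y ≤ edgeCount rel E (X ∪ Y) + edgeCount rel E (X ∩ Y) := by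
  rw [edgeCount_add_edgeCount]
  gcongr
  exact Set.ncard_le_ncard
    (Set.union_subset (edgeSet_mono _ _ subset_union_left) (edgeSet_mono _ _ subset_union_right))
    (edgeSet_finite _ _ _)

lemma edgeCount_add_edgeCount_of_free (E : L) {X Y : Finset V}
    (hfree : ∀ e, rel E e → e ⊆ X ∪ Y → e ⊆ X ∨ e ⊆ Y) :
    edgeCount rel E X + edgeCount rel E Y = edgeCount rel E (X ∪ Y) + edgeCount rel E (X ∩ Y) := by
  rw [edgeCount_add_edgeCount, edgeCount_eq_ncard_edgeSet rel E (X ∪ Y)]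
  congr 2
  refine (Set.union_subset (edgeSet_mono _ _ subset_union_left)
    (edgeSet_mono _ _ subset_union_right)).antisymm fun e ⟨he, hr⟩ => ?_
  exact (hfree e hr he).imp (⟨·, hr⟩) (⟨·, hr⟩)

variable [Fintype L] (α : L → ℝ)

lemma delta_union_add_delta_inter (X Y : Finset V) :
    delta α rel (X ∪ Y) + delta α rel (X ∩ Y) = delta α rel X + delta α rel Y +
      ∑ E, α E * ((edgeCount rel E X + edgeCount rel E Y : ℕ) -
        (edgeCount rel E (X ∪ Y) + edgeCount rel E (X ∩ Y) : ℕ) : ℝ) := by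
  have hcard : ((X ∪ Y).card + (X ∩ Y).card : ℝ) = X.card + Y.card := by
    exact_mod_cast card_union_add_card_inter X Y
  simp only [delta, Nat.cast_add, mul_sub, mul_add, sum_sub_distrib, sum_add_distrib]
  linarith

lemma delta_union_add_delta_inter_le (hα : ∀ E, 0 ≤ α E) (X Y : Finset V) :
    delta α rel (X ∪ Y) + delta α rel (X ∩ Y) ≤ delta α rel X + delta α rel Y := by
  rw [delta_union_add_delta_inter]
  refine add_le_of_nonpos_right (sum_nonpos fun E _ => mul_nonpos_of_nonneg_of_nonpos (hα E) ?_)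
  exact sub_nonpos.mpr (Nat.cast_le.mpr (edgeCount_add_edgeCount_le rel E X Y))

lemma delta_union_add_delta_inter_of_free {X Y : Finset V}
    (hfree : ∀ E e, rel E e → e ⊆ X ∪ Y → e ⊆ X ∨ e ⊆ Y) :
    delta α rel (X ∪ Y) + delta α rel (X ∩ Y) = delta α rel X + delta α rel Y := by
  simp [delta_union_add_delta_inter, edgeCount_add_edgeCount_of_free rel _ (hfree _)]

lemma delta_add_delta_inter_of_subset_free_join {B C : Finset V}
    (hfree : ∀ E (e : Finset V), rel E e → e ⊆ B ∪ C → e ⊆ B ∨ e ⊆ C)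
    {D : Finset V} (hD : D ⊆ B ∪ C) :
    delta α rel D + delta α rel (D ∩ (B ∩ C)) = delta α rel (D ∩ B) + delta α rel (D ∩ C) := by
  have hunion : D ∩ B ∪ D ∩ C = D := by rwa [← inter_union_distrib_left, inter_eq_left]
  have hsplit : ∀ E e, rel E e → e ⊆ D ∩ B ∪ D ∩ C → e ⊆ D ∩ B ∨ e ⊆ D ∩ C := by
    intro E e hr he
    rw [hunion] at he
    exact (hfree E e hr (he.trans hD)).imp (subset_inter he) (subset_inter he)
  have := delta_union_add_delta_inter_of_free rel α hsplit
  rwa [hunion, ← inter_inter_distrib_left] at this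

lemma strong.delta_inter_le (hα : ∀ E, 0 ≤ α E) {A B : Finset V} (hAB : strong α rel A B)
    {X : Finset V} (hX : X ⊆ B) : delta α rel (A ∩ X) ≤ delta α rel X := by
  have := delta_union_add_delta_inter_le rel α hα A X
  have := hAB.2 (A ∪ X) subset_union_left (union_subset hAB.1 hX)
  linarith

end Rank

theorem stmt8_general {L V : Type} [Fintype L] [DecidableEq V] (α : L → ℝ)
    (hα : ∀ E, 0 < α E ∧ α E ≤ 1)
    (rel : L → Finset V → Prop)
    (A B C : Finset V) (hA : A = B ∩ C)
    (hC : inK α rel C)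
    (hAB : strong α rel A B)
    (hfree : ∀ E (e : Finset V), rel E e → e ⊆ B ∪ C → (e ⊆ B ∨ e ⊆ C)) :
    inK α rel (B ∪ C) ∧ strong α rel C (B ∪ C) := by
  have hα₀ : ∀ E, 0 ≤ α E := fun E => (hα E).1.le
  have hAC : A ⊆ C := hA ▸ inter_subset_right
  refine ⟨fun D hD => ?_, subset_union_right, fun D hCD hD => ?_⟩
  · have hjoin := delta_add_delta_inter_of_subset_free_join rel α hfree hD
    have hside := hAB.delta_inter_le rel α hα₀ (X := D ∩ B) inter_subset_right
    have hmeet : A ∩ (D ∩ B) = D ∩ (B ∩ C) := by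
      subst hA; ext; simp only [mem_inter]; tauto
    rw [hmeet] at hside
    have hDC := hC (D ∩ C) inter_subset_right
    linarith
  · have hjoin := delta_add_delta_inter_of_subset_free_join rel α hfree hD
    rw [inter_eq_right.mpr hCD, ← hA, inter_eq_right.mpr (hAC.trans hCD)] at hjoin
    have hside := hAB.2 (D ∩ B) (subset_inter (hAC.trans hCD) hAB.1) inter_subset_right
    linarith

/-- If `B, C ∈ K_α`, `A = B ∩ C` and `A ≤ B`, then the free join `B ⊕_A C`
lies in `K_α` and `C ≤ B ⊕_A C`. -/
theorem stmt8 {L V : Type} [Fintype L] [DecidableEq V] (α : L → ℝ)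
    (hα : ∀ E, 0 < α E ∧ α E ≤ 1) (ar : L → ℕ) (har : ∀ E, 2 ≤ ar E)
    (rel : L → Finset V → Prop) (hedge : ∀ E e, rel E e → e.card = ar E)
    (A B C : Finset V) (hA : A = B ∩ C)
    (hB : inK α rel B) (hC : inK α rel C)
    (hAB : strong α rel A B)
    (hfree : ∀ E (e : Finset V), rel E e → e ⊆ B ∪ C → (e ⊆ B ∨ e ⊆ C)) :
    inK α rel (B ∪ C) ∧ strong α rel C (B ∪ C) :=
  stmt8_general α hα rel A B C hA hC hAB hfree
end

section
/- For a finite structure Z in K_L and a finite substructure A ⊆ Z, A ≤ Z holds if and only if A is closed in Z (i.e., for every A_0 ⊆ A, every minimal pair (A_0, B) with B ⊆ Z satisfies B ⊆ A). -/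
open Finset

lemma edgeSet_finite_s10 {L V : Type} (rel : L → Finset V → Prop) (E : L)
    (A : Finset V) : {e : Finset V | e ⊆ A ∧ rel E e}.Finite :=
  (A.powerset : Finset (Finset V)).finite_toSet.subset
    (fun e he => by simpa [Finset.mem_powerset] using he.1)

lemma edgeCount_supermodular {L V : Type} [DecidableEq V]
    (rel : L → Finset V → Prop) (E : L) (A B : Finset V) :
    edgeCount rel E A + edgeCount rel E B ≤
      edgeCount rel E (A ∪ B) + edgeCount rel E (A ∩ B) := by
  classical
  set SA := {e : Finset V | e ⊆ A ∧ rel E e}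
  set SB := {e : Finset V | e ⊆ B ∧ rel E e}
  have hfA : SA.Finite := edgeSet_finite_s10 rel E A
  have hfB : SB.Finite := edgeSet_finite_s10 rel E B
  have hkey : SA.ncard + SB.ncard = (SA ∪ SB).ncard + (SA ∩ SB).ncard :=
    (Set.ncard_union_add_ncard_inter SA SB hfA hfB).symm
  have h1 : (SA ∪ SB).ncard ≤ edgeCount rel E (A ∪ B) := by
    apply Set.ncard_le_ncard
    · rintro e (he | he)
      · exact ⟨he.1.trans subset_union_left, he.2⟩
      · exact ⟨he.1.trans subset_union_right, he.2⟩
    · exact edgeSet_finite_s10 rel E (A ∪ B)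
  have h2 : SA ∩ SB = {e : Finset V | e ⊆ A ∩ B ∧ rel E e} := by
    ext e
    simp only [SA, SB, Set.mem_inter_iff, Set.mem_setOf_eq, Finset.subset_inter_iff]
    tauto
  have h2' : (SA ∩ SB).ncard = edgeCount rel E (A ∩ B) := by rw [h2]; rfl
  calc edgeCount rel E A + edgeCount rel E B
      = (SA ∪ SB).ncard + (SA ∩ SB).ncard := hkey
    _ ≤ edgeCount rel E (A ∪ B) + edgeCount rel E (A ∩ B) := by
        rw [h2']; exact Nat.add_le_add_right h1 _

lemma delta_submodular {L V : Type} [Fintype L] [DecidableEq V] (α : L → ℝ)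
    (hα : ∀ E, 0 ≤ α E) (rel : L → Finset V → Prop) (A B : Finset V) :
    delta α rel (A ∪ B) + delta α rel (A ∩ B) ≤ delta α rel A + delta α rel B := by
  have hcard : ((A ∪ B).card : ℝ) + ((A ∩ B).card : ℝ) = (A.card : ℝ) + (B.card : ℝ) := by
    have := Finset.card_union_add_card_inter A B
    exact_mod_cast congrArg (fun n : ℕ => (n : ℝ)) this
  have hsum : ∑ E, α E * (edgeCount rel E A : ℝ) + ∑ E, α E * (edgeCount rel E B : ℝ) ≤
      ∑ E, α E * (edgeCount rel E (A ∪ B) : ℝ) +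
        ∑ E, α E * (edgeCount rel E (A ∩ B) : ℝ) := by
    rw [← Finset.sum_add_distrib, ← Finset.sum_add_distrib]
    apply Finset.sum_le_sum
    intro E _
    rw [← mul_add, ← mul_add]
    apply mul_le_mul_of_nonneg_left _ (hα E)
    exact_mod_cast edgeCount_supermodular rel E A B
  simp only [delta]
  linarith

/-- For a finite structure `Z` and `A ⊆ Z`: `A ≤ Z` iff `A` is closed in `Z`,
i.e. every minimal pair `(A₀, B)` with `A₀ ⊆ A` and `B ⊆ Z` satisfies `B ⊆ A`. -/
theorem stmt10 {L V : Type} [Fintype L] [DecidableEq V] (α : L → ℝ)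
    (hα : ∀ E, 0 < α E ∧ α E ≤ 1) (ar : L → ℕ) (har : ∀ E, 2 ≤ ar E)
    (rel : L → Finset V → Prop) (hedge : ∀ E e, rel E e → e.card = ar E)
    (A Z : Finset V) (hAZ : A ⊆ Z) :
    strong α rel A Z ↔
      ∀ A₀ B : Finset V, A₀ ⊆ A → B ⊆ Z → minPair α rel A₀ B → B ⊆ A := by
  classical
  constructor
  · rintro ⟨-, hS⟩ A₀ B hA₀A hBZ ⟨hA₀B, hmin, hnst⟩
    -- δ(B) < δ(A₀)
    have hδB : delta α rel B < delta α rel A₀ := by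
      rw [strong, not_and] at hnst
      push_neg at hnst
      obtain ⟨A', hA₀A', hA'B, hlt⟩ := hnst hA₀B
      rcases eq_or_ne A' B with rfl | hne
      · exact hlt
      · exfalso
        have := (hmin A' hA₀A' (ssubset_of_subset_of_ne hA'B hne)).2 A' hA₀A'
          (subset_refl _)
        linarith
    by_contra hnBA
    have hprop : A ∩ B ⊂ B := by
      refine ssubset_of_subset_of_ne inter_subset_right (fun h => hnBA ?_)
      rw [← h]; exact inter_subset_left
    have hA₀AB : A₀ ⊆ A ∩ B := subset_inter hA₀A hA₀B
    have h1 : delta α rel A₀ ≤ delta α rel (A ∩ B) :=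
      (hmin (A ∩ B) hA₀AB hprop).2 (A ∩ B) hA₀AB (subset_refl _)
    have h2 : delta α rel A ≤ delta α rel (A ∪ B) :=
      hS (A ∪ B) subset_union_left (union_subset hAZ hBZ)
    have h3 := delta_submodular α (fun E => (hα E).1.le) rel A B
    linarith
  · intro hcl
    refine ⟨hAZ, fun A' hAA' hA'Z => ?_⟩
    by_contra hlt
    push_neg at hlt
    set T : Finset (Finset V) :=
      Z.powerset.filter (fun B => A ⊆ B ∧ delta α rel B < delta α rel A) with hT
    have hA'T : A' ∈ T := by
      simp only [hT, Finset.mem_filter, Finset.mem_powerset]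
      exact ⟨hA'Z, hAA', hlt⟩
    obtain ⟨B, hBT, hBmin⟩ := T.exists_min_image Finset.card ⟨A', hA'T⟩
    simp only [hT, Finset.mem_filter, Finset.mem_powerset] at hBT
    obtain ⟨hBZ, hAB, hδB⟩ := hBT
    have hmp : minPair α rel A B := by
      refine ⟨hAB, fun C hAC hCB => ⟨hAC, fun C' hAC' hC'C => ?_⟩, fun hst =>
        absurd (hst.2 B hAB (subset_refl _)) (not_le.mpr hδB)⟩
      by_contra h'
      push_neg at h'
      have hC'T : C' ∈ T := by
        simp only [hT, Finset.mem_filter, Finset.mem_powerset]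
        exact ⟨(hC'C.trans hCB.subset).trans hBZ, hAC', h'⟩
      have : B.card ≤ C'.card := hBmin C' hC'T
      have : C'.card < B.card :=
        Finset.card_lt_card (lt_of_le_of_lt hC'C hCB)
      omega
    have hBA : B ⊆ A := hcl A B (subset_refl A) hBZ hmp
    have : B = A := Finset.Subset.antisymm hBA hAB
    rw [this] at hδB
    exact lt_irrefl _ hδB
end

section
/- Let M ⊨ S_α^∀, A, B ∈ K_α with B ∩ M = A, and N = M ⊕_A B. If A ≤ M then B ≤ N, and if additionally M has finite closures, then N has finite closures. -/
open Finset

/-- `M ⊨ S_α^∀`: every finite substructure of `M` lies in `K_α`. -/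
def modelsUnivTh {L V : Type} [Fintype L] (α : L → ℝ)
    (rel : L → Finset V → Prop) (M : Set V) : Prop :=
  ∀ A : Finset V, ↑A ⊆ M → inK α rel A

/-- `X` is closed in `Z`: every minimal pair `(D, E)` with `D ⊆ X` finite and
`E ⊆ Z` satisfies `E ⊆ X`. -/
def closedIn {L V : Type} [Fintype L] (α : L → ℝ)
    (rel : L → Finset V → Prop) (X Z : Set V) : Prop :=
  ∀ D E : Finset V, ↑D ⊆ X → ↑E ⊆ Z → minPair α rel D E → ↑E ⊆ X

/-- A finite `A` is strong in the (possibly infinite) `M`: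
`A ≤ F` for every finite `A ⊆ F ⊆ M`. -/
def strongIn {L V : Type} [Fintype L] (α : L → ℝ)
    (rel : L → Finset V → Prop) (A : Finset V) (M : Set V) : Prop :=
  ↑A ⊆ M ∧ ∀ F : Finset V, A ⊆ F → ↑F ⊆ M → strong α rel A F

/-- `M` has finite closures: every finite subset of `M` is contained in a
finite strong substructure of `M`. -/
def finiteClosures {L V : Type} [Fintype L] (α : L → ℝ)
    (rel : L → Finset V → Prop) (M : Set V) : Prop :=
  ∀ A : Finset V, ↑A ⊆ M → ∃ B : Finset V, A ⊆ B ∧ strongIn α rel B M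

/-- `N` preserves closures for `M`: every `X ⊆ M` closed in `M` is closed in `N`. -/
def preservesClosures {L V : Type} [Fintype L] (α : L → ℝ)
    (rel : L → Finset V → Prop) (M N : Set V) : Prop :=
  ∀ X ⊆ M, closedIn α rel X M → closedIn α rel X N


private lemma edgeCount_finite {L V : Type} (rel : L → Finset V → Prop) (E : L)
    (X : Finset V) : {e : Finset V | e ⊆ X ∧ rel E e}.Finite := by
  apply Set.Finite.subset (X.powerset.finite_toSet)
  intro e he
  simpa [Finset.mem_powerset] using he.1

private lemma delta_split {L V : Type} [Fintype L] [DecidableEq V] (α : L → ℝ)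
    (rel : L → Finset V → Prop) (F' B A F : Finset V)
    (hF : F = F' ∪ B) (hI : F' ∩ B = A)
    (hsplit : ∀ E e, rel E e → e ⊆ F → e ⊆ F' ∨ e ⊆ B) :
    delta α rel F + delta α rel A = delta α rel F' + delta α rel B := by
  have hc : F.card + A.card = F'.card + B.card := by
    rw [hF, ← hI]; exact Finset.card_union_add_card_inter F' B
  have hs : ∀ E, (edgeCount rel E F : ℝ) + edgeCount rel E A
      = edgeCount rel E F' + edgeCount rel E B := by
    intro E
    have hU : {e : Finset V | e ⊆ F ∧ rel E e}
        = {e : Finset V | e ⊆ F' ∧ rel E e} ∪ {e : Finset V | e ⊆ B ∧ rel E e} := by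
      ext e
      simp only [Set.mem_setOf_eq, Set.mem_union]
      constructor
      · rintro ⟨heF, hre⟩
        rcases hsplit E e hre heF with h | h
        · exact Or.inl ⟨h, hre⟩
        · exact Or.inr ⟨h, hre⟩
      · rintro (⟨h, hre⟩ | ⟨h, hre⟩)
        · exact ⟨h.trans (by rw [hF]; exact Finset.subset_union_left), hre⟩
        · exact ⟨h.trans (by rw [hF]; exact Finset.subset_union_right), hre⟩
    have hInt : {e : Finset V | e ⊆ F' ∧ rel E e} ∩ {e : Finset V | e ⊆ B ∧ rel E e}
        = {e : Finset V | e ⊆ A ∧ rel E e} := by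
      ext e
      simp only [Set.mem_setOf_eq, Set.mem_inter_iff]
      constructor
      · rintro ⟨⟨h1, hre⟩, ⟨h2, _⟩⟩
        exact ⟨by rw [← hI]; exact Finset.subset_inter h1 h2, hre⟩
      · rintro ⟨h, hre⟩
        rw [← hI] at h
        exact ⟨⟨h.trans Finset.inter_subset_left, hre⟩,
          ⟨h.trans Finset.inter_subset_right, hre⟩⟩
    have key : edgeCount rel E F + edgeCount rel E A
        = edgeCount rel E F' + edgeCount rel E B := by
      unfold edgeCount
      rw [hU, ← hInt]
      exact Set.ncard_union_add_ncard_inter _ _ (edgeCount_finite rel E F')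
        (edgeCount_finite rel E B)
    exact_mod_cast congrArg (Nat.cast : ℕ → ℝ) key
  have hc' : (F.card : ℝ) + A.card = F'.card + B.card := by exact_mod_cast hc
  have hsum : (∑ E, α E * (edgeCount rel E F : ℝ)) + ∑ E, α E * (edgeCount rel E A : ℝ)
      = (∑ E, α E * (edgeCount rel E F' : ℝ)) + ∑ E, α E * (edgeCount rel E B : ℝ) := by
    rw [← Finset.sum_add_distrib, ← Finset.sum_add_distrib]
    refine Finset.sum_congr rfl fun E _ => ?_
    rw [← mul_add, ← mul_add, hs E]
  unfold delta
  linarith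

/-- If `M ⊨ S_α^∀`, `A, B ∈ K_α`, `B ∩ M = A`, `N = M ⊕_A B`, and `A ≤ M`, then
`B ≤ N`; if additionally `M` has finite closures, then so does `N`. -/
theorem stmt15 {L V : Type} [Fintype L] [DecidableEq V] (α : L → ℝ)
    (hα : ∀ E, 0 < α E ∧ α E ≤ 1) (ar : L → ℕ) (har : ∀ E, 2 ≤ ar E)
    (rel : L → Finset V → Prop) (hedge : ∀ E e, rel E e → e.card = ar E)
    (M : Set V) (hM : modelsUnivTh α rel M)
    (A B : Finset V) (hAK : inK α rel A) (hBK : inK α rel B)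
    (hBM : ↑B ∩ M = (↑A : Set V))
    (hfree : ∀ E (e : Finset V), rel E e → ↑e ⊆ M ∪ ↑B → (↑e ⊆ M ∨ e ⊆ B))
    (hAM : strongIn α rel A M) :
    strongIn α rel B (M ∪ ↑B) ∧
      (finiteClosures α rel M → finiteClosures α rel (M ∪ ↑B)) := by
  classical
  obtain ⟨hAMs, hAstr⟩ := hAM
  have hABsub : A ⊆ B := fun x hx => by
    have : (x : V) ∈ (↑B ∩ M : Set V) := by rw [hBM]; exact hx
    exact this.1
  -- the key computation
  have key : ∀ G : Finset V, B ⊆ G → ↑G ⊆ M ∪ ↑B →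
      delta α rel G + delta α rel A = delta α rel (G.filter (· ∈ M)) + delta α rel B := by
    intro G hBG hGN
    set G' := G.filter (· ∈ M) with hG'def
    have hG'M : ↑G' ⊆ M := fun x hx => (Finset.mem_filter.mp hx).2
    have hG : G = G' ∪ B := by
      apply Finset.Subset.antisymm
      · intro x hx
        rcases hGN hx with h | h
        · exact Finset.mem_union_left _ (Finset.mem_filter.mpr ⟨hx, h⟩)
        · exact Finset.mem_union_right _ h
      · exact Finset.union_subset (Finset.filter_subset _ _) hBG
    have hI : G' ∩ B = A := by
      apply Finset.Subset.antisymm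
      · intro x hx
        have hx1 := Finset.mem_inter.mp hx
        have : (x : V) ∈ (↑B ∩ M : Set V) :=
          ⟨hx1.2, (Finset.mem_filter.mp hx1.1).2⟩
        rw [hBM] at this; exact this
      · intro x hx
        refine Finset.mem_inter.mpr ⟨Finset.mem_filter.mpr ⟨hBG (hABsub hx), hAMs hx⟩,
          hABsub hx⟩
    refine delta_split α rel G' B A G hG hI ?_
    intro E e hre heG
    have heN : ↑e ⊆ M ∪ ↑B := fun x hx => hGN (heG hx)
    rcases hfree E e hre heN with h | h
    · exact Or.inl (fun x hx => Finset.mem_filter.mpr ⟨heG hx, h hx⟩)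
    · exact Or.inr h
  have hBstep : ∀ G : Finset V, B ⊆ G → ↑G ⊆ M ∪ ↑B →
      delta α rel B ≤ delta α rel G := by
    intro G hBG hGN
    have hk := key G hBG hGN
    set G' := G.filter (· ∈ M)
    have hG'M : ↑G' ⊆ M := fun x hx => (Finset.mem_filter.mp hx).2
    have hAG' : A ⊆ G' := fun x hx =>
      Finset.mem_filter.mpr ⟨hBG (hABsub hx), hAMs hx⟩
    have := (hAstr G' hAG' hG'M).2 G' hAG' (Finset.Subset.refl _)
    linarith
  have hBsub : (↑B : Set V) ⊆ M ∪ ↑B := Set.subset_union_right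
  have hBstrong : strongIn α rel B (M ∪ ↑B) := by
    refine ⟨hBsub, fun F hBF hFN => ⟨hBF, fun A' hBA' hA'F => ?_⟩⟩
    exact hBstep A' hBA' (fun x hx => hFN (hA'F hx))
  refine ⟨hBstrong, fun hfc => ?_⟩
  intro C hCN
  obtain ⟨D, hCD, hDM, hDstr⟩ := hfc ((C.filter (· ∈ M)) ∪ A)
    (by
      rw [Finset.coe_union]
      exact Set.union_subset
        (fun x hx => by
          simp only [Finset.coe_filter, Set.mem_setOf_eq] at hx; exact hx.2) hAMs)
  refine ⟨D ∪ B, ?_, ?_, ?_⟩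
  · intro x hx
    rcases hCN hx with h | h
    · exact Finset.mem_union_left _ (hCD (Finset.mem_union_left _
        (Finset.mem_filter.mpr ⟨hx, h⟩)))
    · exact Finset.mem_union_right _ h
  · rw [Finset.coe_union]
    exact Set.union_subset (fun x hx => Or.inl (hDM hx)) (fun x hx => Or.inr hx)
  · -- for every G with D ∪ B ⊆ G ⊆ N, δ(D∪B) ≤ δ(G)
    have hAD : A ⊆ D := fun x hx => hCD (Finset.mem_union_right _ hx)
    have hDBN : ↑(D ∪ B) ⊆ M ∪ ↑B := by
      rw [Finset.coe_union]
      exact Set.union_subset (fun x hx => Or.inl (hDM hx)) (fun x hx => Or.inr hx)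
    have hBDB : B ⊆ D ∪ B := Finset.subset_union_right
    have hDBkey := key (D ∪ B) hBDB hDBN
    have hDBfilter : (D ∪ B).filter (· ∈ M) = D := by
      apply Finset.Subset.antisymm
      · intro x hx
        obtain ⟨hx1, hx2⟩ := Finset.mem_filter.mp hx
        rcases Finset.mem_union.mp hx1 with h | h
        · exact h
        · have : (x : V) ∈ (↑B ∩ M : Set V) := ⟨h, hx2⟩
          rw [hBM] at this
          exact hAD this
      · intro x hx
        exact Finset.mem_filter.mpr ⟨Finset.mem_union_left _ hx, hDM hx⟩
    rw [hDBfilter] at hDBkey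
    have step : ∀ G : Finset V, D ∪ B ⊆ G → ↑G ⊆ M ∪ ↑B →
        delta α rel (D ∪ B) ≤ delta α rel G := by
      intro G hDBG hGN
      have hBG : B ⊆ G := hBDB.trans hDBG
      have hGkey := key G hBG hGN
      set G' := G.filter (· ∈ M)
      have hG'M : ↑G' ⊆ M := fun x hx => (Finset.mem_filter.mp hx).2
      have hDG' : D ⊆ G' := fun x hx =>
        Finset.mem_filter.mpr ⟨hDBG (Finset.mem_union_left _ hx), hDM hx⟩
      have := (hDstr G' hDG' hG'M).2 G' hDG' (Finset.Subset.refl _)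
      linarith
    exact fun F hDBF hFN => ⟨hDBF, fun A' hA1 hA2 =>
      step A' hA1 (fun x hx => hFN (hA2 hx))⟩
end
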